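/- Let G ⪰ 0 be a symmetric positive semidefinite n×n matrix with ‖G‖ ≤ g, let F, F̃ ∈ ℝ^{n×m}, and let 0 < τ ≤ 1/(4g). Then −τ F̃ᵀ F − τ Fᵀ F̃ + τ² F̃ᵀ G F̃ ⪯ (4τ + 4τ² g)(F̃ − F)ᵀ(F̃ − F) − (τ/4) Fᵀ F, in the positive semidefinite order on symmetric m×m matrices. -/

import Mathlib

open Matrix
open scoped Matrix.Norms.L2Operator

/-!
With `D = F̃ - F` and `A = 2 D + F / 2`, the difference of the two sides is the explicit
combination
`τ² F̃ᵀ (g I - G) F̃ + (τ - τ² g) AᵀA + 7 τ² g DᵀD + (3τ/2 - 3τ² g/4) FᵀF`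
of Gram-type matrices. Its coefficients are nonnegative because `τ g ≤ 1/4`, and `g I - G ⪰ 0`
because `G` is symmetric with `‖G‖ ≤ g`.
-/

namespace Matrix

variable {ι κ : Type*} [Fintype ι]

lemma dotProduct_mulVec_le_l2_opNorm_mul [DecidableEq ι] (A : Matrix ι ι ℝ) (x : ι → ℝ) :
    x ⬝ᵥ (A *ᵥ x) ≤ ‖A‖ * (x ⬝ᵥ x) := by
  set y : EuclideanSpace ℝ ι := WithLp.toLp 2 x
  have hxx : x ⬝ᵥ x = ‖y‖ ^ 2 := by
    rw [← real_inner_self_eq_norm_sq, EuclideanSpace.inner_toLp_toLp, star_trivial]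
  calc x ⬝ᵥ (A *ᵥ x)
      = inner ℝ y (WithLp.toLp 2 (A *ᵥ x)) := by
        rw [EuclideanSpace.inner_toLp_toLp, star_trivial, dotProduct_comm]
    _ ≤ ‖y‖ * ‖WithLp.toLp 2 (A *ᵥ x)‖ := real_inner_le_norm _ _
    _ ≤ ‖y‖ * (‖A‖ * ‖y‖) := by gcongr; exact A.l2_opNorm_mulVec y
    _ = ‖A‖ * (x ⬝ᵥ x) := by rw [hxx]; ring

lemma posSemidef_smul_one_sub_of_l2_opNorm_le [DecidableEq ι] {A : Matrix ι ι ℝ}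
    (hA : A.IsHermitian) {c : ℝ} (hc : ‖A‖ ≤ c) : (c • 1 - A).PosSemidef := by
  refine .of_dotProduct_mulVec_nonneg ((isHermitian_one.smul (.all c)).sub hA) fun x ↦ ?_
  have hAx := A.dotProduct_mulVec_le_l2_opNorm_mul x
  have hxx : 0 ≤ x ⬝ᵥ x := by
    simpa using dotProduct_star_self_nonneg x
  rw [star_trivial, sub_mulVec, dotProduct_sub, smul_mulVec, one_mulVec, dotProduct_smul,
    smul_eq_mul, sub_nonneg]
  nlinarith

lemma posSemidef_transpose_mul_self [Finite κ] (A : Matrix ι κ ℝ) : (Aᵀ * A).PosSemidef := by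
  simpa only [conjTranspose_eq_transpose_of_trivial] using posSemidef_conjTranspose_mul_self A

lemma PosSemidef.transpose_mul_mul_same [Finite κ] {A : Matrix ι ι ℝ} (hA : A.PosSemidef)
    (B : Matrix ι κ ℝ) : (Bᵀ * A * B).PosSemidef := by
  simpa only [conjTranspose_eq_transpose_of_trivial] using hA.conjTranspose_mul_mul_same B

end Matrix

lemma descent_difference_eq {ι κ : Type*} [Fintype ι] [DecidableEq ι] (G : Matrix ι ι ℝ)
    (F Ft : Matrix ι κ ℝ) (g τ : ℝ) :
    ((4 * τ + 4 * τ ^ 2 * g) • ((Ft - F)ᵀ * (Ft - F)) - (τ / 4) • (Fᵀ * F)) -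
        (-(τ • (Ftᵀ * F)) - τ • (Fᵀ * Ft) + τ ^ 2 • (Ftᵀ * G * Ft)) =
      τ ^ 2 • (Ftᵀ * (g • 1 - G) * Ft) +
        (τ - τ ^ 2 * g) •
          (((2 : ℝ) • (Ft - F) + (1 / 2 : ℝ) • F)ᵀ * ((2 : ℝ) • (Ft - F) + (1 / 2 : ℝ) • F)) +
        (7 * τ ^ 2 * g) • ((Ft - F)ᵀ * (Ft - F)) +
        (3 * τ / 2 - 3 * τ ^ 2 * g / 4) • (Fᵀ * F) := by
  simp only [transpose_sub, transpose_add, transpose_smul, Matrix.sub_mul, Matrix.mul_sub,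
    Matrix.add_mul, Matrix.mul_add, Matrix.smul_mul, Matrix.mul_smul, Matrix.mul_one, smul_sub]
  module

/-- Core matrix inequality of the descent lemma: for PSD `G` with `‖G‖ ≤ g` and
`0 < τ ≤ 1/(4g)`,
`−τ F̃ᵀF − τ FᵀF̃ + τ² F̃ᵀGF̃ ⪯ (4τ + 4τ²g)(F̃−F)ᵀ(F̃−F) − (τ/4) FᵀF`. -/
theorem stmt16 {n m : ℕ} (G : Matrix (Fin n) (Fin n) ℝ)
    (F Ft : Matrix (Fin n) (Fin m) ℝ) (g τ : ℝ)
    (hG : G.PosSemidef) (hGn : ‖G‖ ≤ g) (hg : 0 < g)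
    (hτ0 : 0 < τ) (hτ : τ ≤ 1 / (4 * g)) :
    (((4 * τ + 4 * τ ^ 2 * g) • ((Ft - F)ᵀ * (Ft - F)) - (τ / 4) • (Fᵀ * F)) -
      (-(τ • (Ftᵀ * F)) - τ • (Fᵀ * Ft) + (τ ^ 2) • (Ftᵀ * G * Ft))).PosSemidef := by
  have hτg : τ * g ≤ 1 / 4 := by
    rw [le_div_iff₀ (by positivity)] at hτ
    linarith
  rw [descent_difference_eq]
  refine .add (.add (.add ?_ ?_) ?_) ?_
  · exact ((posSemidef_smul_one_sub_of_l2_opNorm_le hG.isHermitian hGn).transpose_mul_mul_same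
      Ft).smul (sq_nonneg τ)
  · exact (posSemidef_transpose_mul_self _).smul (by nlinarith)
  · exact (posSemidef_transpose_mul_self _).smul (by positivity)
  · exact (posSemidef_transpose_mul_self _).smul (by nlinarith)
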